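/- arXiv:2505.05424 — 2 statements merged into one kernel-verified Lean document; each statement's English description precedes it below -/
import Mathlib

section
/- Let y = (y₀, ȳ) and z = (z₀, z̄) both lie in the second-order cone K_soc ⊂ ℝ^{1+n}. If ⟨y, z⟩ = 0, then y = 0, or z = 0, or there exists a constant η > 0 such that y₀ = η z₀ and ȳ = -η z̄. -/
/-- Tail of a vector in ℝ^{1+n}. -/
def socTail {n : ℕ} (y : EuclideanSpace ℝ (Fin (n + 1))) : EuclideanSpace ℝ (Fin n) :=
  WithLp.toLp 2 (fun i : Fin n => y i.succ)

/-- The second-order cone in ℝ^{1+n}. -/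
def socCone (n : ℕ) : Set (EuclideanSpace ℝ (Fin (n + 1))) :=
  {y | ‖socTail y‖ ≤ y 0}

/-!
Orthogonality of `y = (y₀, ȳ)` and `z = (z₀, z̄)` reads `y₀ z₀ = -⟪ȳ, z̄⟫`, and
Cauchy–Schwarz with the cone conditions gives `-⟪ȳ, z̄⟫ ≤ ‖ȳ‖ ‖z̄‖ ≤ y₀ z₀`. Hence, when
`y₀, z₀ > 0`, both the cone conditions and Cauchy–Schwarz are equalities, which makes `ȳ` and
`z̄` anti-parallel with ratio `y₀ / z₀`; when `y₀ = 0` or `z₀ = 0` the cone condition kills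
the whole vector.
-/

open scoped RealInnerProductSpace

theorem smul_eq_neg_smul_of_mul_add_inner_eq_zero {E : Type*} [NormedAddCommGroup E]
    [InnerProductSpace ℝ E] {a b : E} {s t : ℝ} (hs : 0 < s) (ht : 0 < t) (ha : ‖a‖ ≤ s)
    (hb : ‖b‖ ≤ t) (h : s * t + ⟪a, b⟫ = 0) : t • a = -(s • b) := by
  have hcs : -(‖a‖ * ‖b‖) ≤ ⟪a, b⟫ := neg_le_of_abs_le (abs_real_inner_le_norm a b)
  have hna : ‖a‖ = s := by nlinarith [norm_nonneg a, norm_nonneg b]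
  have hnb : ‖b‖ = t := by nlinarith [norm_nonneg a, norm_nonneg b]
  have hanti : ⟪a, -b⟫ = ‖a‖ * ‖-b‖ := by
    rw [inner_neg_right, norm_neg, hna, hnb]
    linarith
  simpa only [norm_neg, hna, hnb, smul_neg] using inner_eq_norm_mul_iff_real.mp hanti

theorem inner_eq_mul_add_inner_socTail {n : ℕ} (y z : EuclideanSpace ℝ (Fin (n + 1))) :
    ⟪y, z⟫ = y 0 * z 0 + ⟪socTail y, socTail z⟫ := by
  simp only [PiLp.inner_apply, RCLike.inner_apply, conj_trivial, Fin.sum_univ_succ, socTail]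
  ring

theorem socCone.apply_zero_nonneg {n : ℕ} {y : EuclideanSpace ℝ (Fin (n + 1))}
    (hy : y ∈ socCone n) : 0 ≤ y 0 :=
  (norm_nonneg _).trans hy

theorem socCone.eq_zero_of_apply_zero {n : ℕ} {y : EuclideanSpace ℝ (Fin (n + 1))}
    (hy : y ∈ socCone n) (h0 : y 0 = 0) : y = 0 := by
  have htail : socTail y = 0 := norm_le_zero_iff.mp (h0 ▸ hy)
  ext i
  refine Fin.cases h0 (fun j => ?_) i
  simpa [socTail] using congrArg (· j) htail

/-- Lemma 2.2: orthogonal vectors in the second-order cone are zero or anti-parallel. -/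
theorem soc_orthogonal (n : ℕ) (y z : EuclideanSpace ℝ (Fin (n + 1)))
    (hy : y ∈ socCone n) (hz : z ∈ socCone n) (h : (inner ℝ y z : ℝ) = 0) :
    y = 0 ∨ z = 0 ∨
      ∃ η : ℝ, 0 < η ∧ y 0 = η * z 0 ∧ ∀ i : Fin n, y i.succ = -η * z i.succ := by
  rcases (socCone.apply_zero_nonneg hy).eq_or_lt with hy0 | hy0
  · exact Or.inl (socCone.eq_zero_of_apply_zero hy hy0.symm)
  rcases (socCone.apply_zero_nonneg hz).eq_or_lt with hz0 | hz0
  · exact Or.inr (Or.inl (socCone.eq_zero_of_apply_zero hz hz0.symm))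
  have hanti := smul_eq_neg_smul_of_mul_add_inner_eq_zero hy0 hz0 hy hz
    (inner_eq_mul_add_inner_socTail y z ▸ h)
  refine Or.inr (Or.inr ⟨y 0 / z 0, div_pos hy0 hz0, by field_simp, fun i => ?_⟩)
  have hi : z 0 * y i.succ = -(y 0 * z i.succ) := by
    simpa [socTail] using congrArg (· i) hanti
  field_simp
  linarith
end

section
/- Let F : ℝⁿ → ℝ^m be a linear map whose matrix has in each row at most one nonzero entry equal to 1. Then for any vectors η ∈ ℝ^m and q ∈ ℝⁿ, F*(η ⊙ (F q)) = (F* η) ⊙ q, where ⊙ denotes the componentwise (Hadamard) product. -/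
/-- For a selection matrix M (each row has at most one nonzero entry, equal to 1),
    Mᵀ(η ⊙ (Mq)) = (Mᵀη) ⊙ q, with ⊙ the componentwise product. -/
theorem selection_matrix_hadamard (m n : ℕ) (M : Matrix (Fin m) (Fin n) ℝ)
    (h01 : ∀ i j, M i j = 0 ∨ M i j = 1)
    (hrow : ∀ i, {j | M i j ≠ 0}.ncard ≤ 1)
    (η : Fin m → ℝ) (q : Fin n → ℝ) :
    M.transpose.mulVec (η * M.mulVec q) = (M.transpose.mulVec η) * q := by
  funext j
  simp only [Matrix.mulVec, dotProduct, Pi.mul_apply, Matrix.transpose_apply,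
    Finset.sum_mul]
  refine Finset.sum_congr rfl fun i _ => ?_
  rcases h01 i j with h0 | h1
  · simp [h0]
  · have hz : ∀ j', j' ≠ j → M i j' = 0 := by
      intro j' hj'
      by_contra hne
      have hsub : ({j, j'} : Set (Fin n)) ⊆ {k | M i k ≠ 0} := by
        intro k hk
        rcases hk with rfl | rfl
        · simp [h1]
        · exact hne
      have h2 : ({j, j'} : Set (Fin n)).ncard = 2 := by
        rw [Set.ncard_pair (Ne.symm hj')]
      have hle := Set.ncard_le_ncard hsub (Set.toFinite _)
      have hr := hrow i
      omega
    have : ∑ j', M i j' * q j' = q j := by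
      rw [Finset.sum_eq_single j]
      · simp [h1]
      · intro b _ hb; simp [hz b hb]
      · simp
    rw [this]; ring
end
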